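/- Residue lemma for rational series: let $M, N$ be $\mathbb{Z}[L,L^{-1}]$-modules, and for a module $P$ let $P\langle T\rangle := P[T][\frac{1}{T^N - L^\nu} : \nu\in\mathbb{Z}, N\ge1]$. Let $a \in M\langle T\rangle$ and $b \in N\langle T\rangle$ both vanish at $T = 0$ and be regular at $T = \infty$, with expansions at $0$ given by $\sum_{k>0} a_k T^k$ and $\sum_{k>0} b_k T^k$. Then the Hadamard product $\sum_{k>0} (a_k \otimes b_k) T^k$ is the expansion at $0$ of an element $c \in (M \otimes_{\mathbb{Z}[L,L^{-1}]} N)\langle T\rangle$, and $c(\infty) = -a(\infty)\otimes b(\infty)$. -/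

import Mathlib

open scoped BigOperators

namespace Stmt14

open Finset

/-- The ground ring `ℤ[L, L⁻¹]`. -/
abbrev R : Type := LaurentPolynomial ℤ

/-- `L ∈ ℤ[L,L⁻¹]`. -/
noncomputable def L (ν : ℤ) : R := LaurentPolynomial.T ν

variable {M : Type*} [AddCommGroup M] [Module R M]

/-- Multiplication of a power series with coefficients in the `R`-module `M`
(encoded as a sequence `ℕ → M`) by a polynomial `q ∈ R[T]`. -/
noncomputable def mulSeq (q : Polynomial R) (a : ℕ → M) : ℕ → M := fun n =>
  ∑ i ∈ Finset.range (n + 1), q.coeff i • a (n - i)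

/-- `a : ℕ → M` (the expansion at `T = 0` of an element of `M⟨T⟩`) is rational with
denominator a product of factors `T^N - L^ν` (`N ≥ 1`, `ν ∈ ℤ`), regular at `T = ∞`
with value `aInf` there: clearing denominators turns `a` into a polynomial `p` of degree
`≤ deg` of the denominator `D = ∑ N_j`, and the value at `∞` is the coefficient
`p D` (the denominator being monic of degree `D`). -/
noncomputable def RatRegVal (a : ℕ → M) (aInf : M) : Prop :=
  ∃ (s : ℕ) (N : Fin s → ℕ) (ν : Fin s → ℤ) (p : ℕ → M),
    (∀ j, 0 < N j) ∧
    (∀ n, (∑ j, N j) < n → p n = 0) ∧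
    mulSeq (∏ j, (Polynomial.X ^ (N j) - Polynomial.C (L (ν j)))) a = p ∧
    aInf = p (∑ j, N j)

/-! ### Auxiliary machinery -/

abbrev W : Type := AddMonoidAlgebra R (ℤ × ℤ)

section Act

variable {P : Type*} [AddCommGroup P] [Module R P]

/-- convolution action of the group algebra `R[ℤ²]` on `ℤ² → P`. -/
noncomputable def act (q : W) (f : ℤ × ℤ → P) : ℤ × ℤ → P :=
  fun v => q.coeff.sum fun g r => r • f (v - g)

lemma act_single (g : ℤ × ℤ) (r : R) (f : ℤ × ℤ → P) :
    act (AddMonoidAlgebra.single g r) f = fun v => r • f (v - g) := by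
  funext v
  exact Finsupp.sum_single_index (by simp)

lemma act_add (q₁ q₂ : W) (f : ℤ × ℤ → P) :
    act (q₁ + q₂) f = act q₁ f + act q₂ f := by
  funext v
  simpa [act] using Finsupp.sum_add_index (by simp) (by intros; rw [add_smul])

lemma act_zero (f : ℤ × ℤ → P) : act (0 : W) f = 0 := by
  funext v; simp [act]

lemma act_zero_right (q : W) : act q (0 : ℤ × ℤ → P) = 0 := by
  funext v; simp [act]

lemma act_sum {ι : Type*} (s : Finset ι) (q : ι → W) (f : ℤ × ℤ → P) :
    act (∑ i ∈ s, q i) f = ∑ i ∈ s, act (q i) f := by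
  classical
  induction s using Finset.induction_on with
  | empty => simp [act_zero]
  | @insert _ _ h ih => rw [Finset.sum_insert h, act_add, ih, Finset.sum_insert h]

lemma act_mul (q₁ q₂ : W) (f : ℤ × ℤ → P) :
    act (q₁ * q₂) f = act q₁ (act q₂ f) := by
  funext v
  rw [act, AddMonoidAlgebra.mul_def]
  simp only [AddMonoidAlgebra.coeff_finsuppSum, AddMonoidAlgebra.coeff_single]
  rw [Finsupp.sum_sum_index (by simp) (by intros; rw [add_smul])]
  rw [act]
  refine Finsupp.sum_congr fun a₁ ha₁ => ?_
  rw [Finsupp.sum_sum_index (by simp) (by intros; rw [add_smul])]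
  rw [act, Finsupp.smul_sum]
  refine Finsupp.sum_congr fun a₂ ha₂ => ?_
  rw [Finsupp.sum_single_index (by simp), mul_smul, sub_sub]

lemma act_aeval (gd : ℤ × ℤ) (q : Polynomial R) (f : ℤ × ℤ → P) (v : ℤ × ℤ) :
    act (Polynomial.aeval (AddMonoidAlgebra.single gd (1:R) : W) q) f v
      = ∑ i ∈ range (q.natDegree + 1), q.coeff i • f (v - i • gd) := by
  conv_lhs => rw [Polynomial.as_sum_range' q (q.natDegree + 1) (Nat.lt_succ_self _)]
  rw [map_sum, act_sum]
  rw [Finset.sum_apply]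
  refine Finset.sum_congr rfl fun i hi => ?_
  rw [Polynomial.aeval_monomial, AddMonoidAlgebra.single_pow, one_pow]
  have : (algebraMap R W) (q.coeff i) = AddMonoidAlgebra.single 0 (q.coeff i) := rfl
  rw [this, AddMonoidAlgebra.single_mul_single, zero_add, mul_one, act_single]

end Act

section Back

/-- backward extension: `back d co a t` is the value "`a (-t)`" obtained by running the
recurrence `∑_{i≤d} co i • a (n - i) = 0` (with `co d = 1`) backwards. -/
noncomputable def back (d : ℕ) (co : ℕ → R) (a : ℕ → M) (t : ℕ) : M :=
  -∑ i ∈ Finset.range d, co i •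
    (if h : 1 ≤ d - i ∧ d - i ≤ t then back d co a (t - (d - i)) else a (d - i - t))
termination_by t
decreasing_by omega

/-- the two-sided extension of `a`. -/
noncomputable def zext (d : ℕ) (co : ℕ → R) (a : ℕ → M) (k : ℤ) : M :=
  if 1 ≤ k then a k.toNat else back d co a (-k).toNat

lemma zext_pos (d : ℕ) (co : ℕ → R) (a : ℕ → M) (n : ℕ) (hn : 1 ≤ n) :
    zext d co a n = a n := by
  simp [zext, Int.toNat_natCast, show (1:ℤ) ≤ n by exact_mod_cast hn]

/-- the full two-sided recurrence. -/
lemma zext_rec (F : Polynomial R) (hF : F.Monic) (a : ℕ → M)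
    (hrec : ∀ n : ℕ, F.natDegree < n → ∑ i ∈ range (n + 1), F.coeff i • a (n - i) = 0)
    (n : ℤ) :
    ∑ i ∈ range (F.natDegree + 1), F.coeff i • zext F.natDegree F.coeff a (n - i) = 0 := by
  by_cases hn : (F.natDegree : ℤ) + 1 ≤ n
  · -- positive range: use hrec
    lift n to ℕ using by omega
    have hn' : F.natDegree < n := by exact_mod_cast hn
    have h1 : ∀ i ∈ range (F.natDegree + 1), F.coeff i • zext F.natDegree F.coeff a ((n:ℤ) - i)
        = F.coeff i • a (n - i) := by
      intro i hi
      simp only [mem_range] at hi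
      have h2 : (1:ℤ) ≤ (n:ℤ) - i := by omega
      have : ((n:ℤ) - i) = ((n - i : ℕ) : ℤ) := by omega
      rw [this, zext_pos _ _ _ _ (by omega)]
    rw [Finset.sum_congr rfl h1]
    have := hrec n (by omega)
    rw [← this]
    apply Finset.sum_subset
    · intro i hi; simp only [mem_range] at *; omega
    · intro i hi hni
      simp only [mem_range] at *
      rw [Polynomial.coeff_eq_zero_of_natDegree_lt (by omega), zero_smul]
  · -- backwards range: by definition of back
    set t : ℕ := ((F.natDegree : ℤ) - n).toNat with ht
    have hnt : n = (F.natDegree : ℤ) - t := by omega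
    rw [Finset.sum_range_succ, show F.coeff F.natDegree = 1 from hF.coeff_natDegree, one_smul]
    have hlast : zext F.natDegree F.coeff a (n - F.natDegree) = back F.natDegree F.coeff a t := by
      rw [zext, if_neg (by omega)]
      congr 1
      omega
    rw [hlast]
    have hmain : ∑ i ∈ range F.natDegree, F.coeff i • zext F.natDegree F.coeff a (n - i)
        = - back F.natDegree F.coeff a t := by
      rw [back]
      rw [neg_neg]
      refine Finset.sum_congr rfl fun i hi => ?_
      simp only [mem_range] at hi
      congr 1
      by_cases hcase : F.natDegree - i ≤ t
      · rw [dif_pos ⟨by omega, hcase⟩, zext, if_neg (by omega)]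
        congr 1
        omega
      · rw [dif_neg (by omega), zext, if_pos (by omega)]
        congr 1
        omega
    rw [hmain, neg_add_cancel]

end Back

section Mem

/-- if each `z i` lies in the "ideal" `(w, v i)`, then `∏ z` lies in `(w, ∏ v)`. -/
lemma prod_mem_aux {ι : Type*} [DecidableEq ι] (s : Finset ι) (z v : ι → W) (w : W)
    (h : ∀ i ∈ s, ∃ p q, z i = p * w + q * v i) :
    ∃ p q, ∏ i ∈ s, z i = p * w + q * ∏ i ∈ s, v i := by
  induction s using Finset.induction_on with
  | empty => exact ⟨0, 1, by simp⟩
  | @insert j s hj ih =>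
    obtain ⟨p, q, hpq⟩ := ih fun i hi => h i (mem_insert_of_mem hi)
    obtain ⟨p', q', hpq'⟩ := h j (mem_insert_self _ _)
    refine ⟨p' * (p * w + q * ∏ i ∈ s, v i) + q' * v j * p, q' * q, ?_⟩
    rw [Finset.prod_insert hj, Finset.prod_insert hj, hpq, hpq']
    ring

noncomputable def xm : W := AddMonoidAlgebra.single ((1:ℤ), (0:ℤ)) 1
noncomputable def ym : W := AddMonoidAlgebra.single ((0:ℤ), (1:ℤ)) 1
noncomputable def zm : W := AddMonoidAlgebra.single ((1:ℤ), (1:ℤ)) 1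

lemma zm_eq : zm = xm * ym := by
  rw [xm, ym, zm, AddMonoidAlgebra.single_mul_single]
  norm_num

noncomputable def C' : R →+* W := algebraMap R W

/-- the single-pair identity. -/
lemma pair_mem (Nj Mi : ℕ) (hN : 0 < Nj) (νj μi : ℤ) :
    ∃ p q, zm ^ (Nat.lcm Nj Mi)
        - C' (L (νj * ((Mi / Nat.gcd Nj Mi : ℕ) : ℤ) + μi * ((Nj / Nat.gcd Nj Mi : ℕ) : ℤ)))
      = p * (xm ^ Nj - C' (L νj)) + q * (ym ^ Mi - C' (L μi)) := by
  set g := Nat.gcd Nj Mi with hg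
  set mb := Mi / g with hmb
  set nb := Nj / g with hnb
  have hg0 : 0 < g := Nat.gcd_pos_of_pos_left _ hN
  have hl1 : Nat.lcm Nj Mi = Nj * mb := by
    rw [hmb, Nat.lcm, hg, Nat.mul_div_assoc _ (Nat.gcd_dvd_right _ _)]
  have hl2 : Nat.lcm Nj Mi = Mi * nb := by
    rw [hnb, Nat.lcm_comm, Nat.lcm, Nat.gcd_comm, hg, Nat.mul_div_assoc _ (Nat.gcd_dvd_left _ _)]
  obtain ⟨P1, hP1⟩ := sub_dvd_pow_sub_pow (xm ^ Nj) (C' (L νj)) mb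
  obtain ⟨P2, hP2⟩ := sub_dvd_pow_sub_pow (ym ^ Mi) (C' (L μi)) nb
  refine ⟨ym ^ Nat.lcm Nj Mi * P1, C' (L νj) ^ mb * P2, ?_⟩
  have hzl : zm ^ Nat.lcm Nj Mi = (xm ^ Nj) ^ mb * (ym ^ Mi) ^ nb := by
    rw [zm_eq, mul_pow, ← pow_mul, ← pow_mul, ← hl1, ← hl2]
  have hC : C' (L (νj * (mb : ℤ) + μi * (nb : ℤ))) = C' (L νj) ^ mb * C' (L μi) ^ nb := by
    rw [← map_pow, ← map_pow, ← map_mul]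
    congr 1
    rw [L, L, L, LaurentPolynomial.T_pow, LaurentPolynomial.T_pow, ← LaurentPolynomial.T_add]
    ring_nf
  rw [hzl, hC]
  calc (xm ^ Nj) ^ mb * (ym ^ Mi) ^ nb - C' (L νj) ^ mb * C' (L μi) ^ nb
      = (ym ^ Mi) ^ nb * ((xm ^ Nj) ^ mb - C' (L νj) ^ mb)
        + C' (L νj) ^ mb * ((ym ^ Mi) ^ nb - C' (L μi) ^ nb) := by ring
    _ = _ := by
        rw [hP1, hP2]
        have : (ym ^ Mi) ^ nb = ym ^ Nat.lcm Nj Mi := by rw [← pow_mul, ← hl2]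
        rw [this]; ring

end Mem

theorem stmt_14 {M N : Type*} [AddCommGroup M] [Module R M]
    [AddCommGroup N] [Module R N]
    (a : ℕ → M) (b : ℕ → N) (aInf : M) (bInf : N)
    (ha0 : a 0 = 0) (hb0 : b 0 = 0)
    (ha : RatRegVal a aInf) (hb : RatRegVal b bInf) :
    RatRegVal (fun k => (a k) ⊗ₜ[R] (b k) : ℕ → TensorProduct R M N)
      (-(aInf ⊗ₜ[R] bInf)) := by
  classical
  obtain ⟨s, Na, νa, pa, hNa, hpa0, hmula, haInf⟩ := ha
  obtain ⟨t, Mb, μb, pb, hMb, hpb0, hmulb, hbInf⟩ := hb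
  -- the denominators
  set F : Polynomial R := ∏ j, (Polynomial.X ^ (Na j) - Polynomial.C (L (νa j))) with hFdef
  set G : Polynomial R := ∏ i, (Polynomial.X ^ (Mb i) - Polynomial.C (L (μb i))) with hGdef
  have hFm : F.Monic :=
    Polynomial.monic_prod_of_monic _ _ fun j _ => Polynomial.monic_X_pow_sub_C _ (hNa j).ne'
  have hGm : G.Monic :=
    Polynomial.monic_prod_of_monic _ _ fun i _ => Polynomial.monic_X_pow_sub_C _ (hMb i).ne'
  have hFdeg : F.natDegree = ∑ j, Na j := by
    rw [hFdef, Polynomial.natDegree_prod_of_monic _ _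
      (fun j _ => Polynomial.monic_X_pow_sub_C _ (hNa j).ne')]
    exact Finset.sum_congr rfl fun j _ => Polynomial.natDegree_X_pow_sub_C
  have hGdeg : G.natDegree = ∑ i, Mb i := by
    rw [hGdef, Polynomial.natDegree_prod_of_monic _ _
      (fun i _ => Polynomial.monic_X_pow_sub_C _ (hMb i).ne')]
    exact Finset.sum_congr rfl fun i _ => Polynomial.natDegree_X_pow_sub_C
  -- the recurrences
  have hreca : ∀ n : ℕ, F.natDegree < n → ∑ i ∈ range (n + 1), F.coeff i • a (n - i) = 0 := by
    intro n hn
    have := congrFun hmula n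
    rw [mulSeq] at this
    rw [this]
    exact hpa0 n (by omega)
  have hrecb : ∀ n : ℕ, G.natDegree < n → ∑ i ∈ range (n + 1), G.coeff i • b (n - i) = 0 := by
    intro n hn
    have := congrFun hmulb n
    rw [mulSeq] at this
    rw [this]
    exact hpb0 n (by omega)
  -- extensions
  set ahat : ℤ → M := zext F.natDegree F.coeff a with hahat
  set bhat : ℤ → N := zext G.natDegree G.coeff b with hbhat
  have hArec := zext_rec F hFm a hreca
  have hBrec := zext_rec G hGm b hrecb
  -- the tensor double sequence
  set atil : ℤ × ℤ → TensorProduct R M N := fun v => ahat v.1 ⊗ₜ[R] bhat v.2 with hatil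
  -- numerator data for c
  set Nc : Fin (s * t) → ℕ := fun k =>
    Nat.lcm (Na (finProdFinEquiv.symm k).1) (Mb (finProdFinEquiv.symm k).2) with hNcdef
  set νc : Fin (s * t) → ℤ := fun k =>
    νa (finProdFinEquiv.symm k).1 *
      ((Mb (finProdFinEquiv.symm k).2 /
        Nat.gcd (Na (finProdFinEquiv.symm k).1) (Mb (finProdFinEquiv.symm k).2) : ℕ) : ℤ)
    + μb (finProdFinEquiv.symm k).2 *
      ((Na (finProdFinEquiv.symm k).1 /
        Nat.gcd (Na (finProdFinEquiv.symm k).1) (Mb (finProdFinEquiv.symm k).2) : ℕ) : ℤ) with hνcdef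
  set Dc : Polynomial R := ∏ k, (Polynomial.X ^ (Nc k) - Polynomial.C (L (νc k))) with hDcdef
  have hNcpos : ∀ k, 0 < Nc k := fun k =>
    Nat.pos_of_ne_zero (Nat.lcm_ne_zero (hNa _).ne' (hMb _).ne')
  have hDcm : Dc.Monic :=
    Polynomial.monic_prod_of_monic _ _ fun k _ => Polynomial.monic_X_pow_sub_C _ (hNcpos k).ne'
  have hDcdeg : Dc.natDegree = ∑ k, Nc k := by
    rw [hDcdef, Polynomial.natDegree_prod_of_monic _ _
      (fun k _ => Polynomial.monic_X_pow_sub_C _ (hNcpos k).ne')]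
    exact Finset.sum_congr rfl fun k _ => Polynomial.natDegree_X_pow_sub_C
  -- actions vanish
  have hactF : act (Polynomial.aeval xm F) atil = 0 := by
    funext v
    rw [xm, act_aeval]
    have h1 : ∀ i ∈ range (F.natDegree + 1),
        F.coeff i • atil (v - i • ((1:ℤ), (0:ℤ)))
          = (F.coeff i • ahat (v.1 - i)) ⊗ₜ[R] bhat v.2 := by
      intro i hi
      have hv : v - i • ((1:ℤ), (0:ℤ)) = (v.1 - i, v.2) := by
        ext <;> simp
      rw [hv, hatil, ← TensorProduct.smul_tmul']
    rw [Finset.sum_congr rfl h1, ← TensorProduct.sum_tmul, hArec v.1, TensorProduct.zero_tmul]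
    rfl
  have hactG : act (Polynomial.aeval ym G) atil = 0 := by
    funext v
    rw [ym, act_aeval]
    have h1 : ∀ i ∈ range (G.natDegree + 1),
        G.coeff i • atil (v - i • ((0:ℤ), (1:ℤ)))
          = ahat v.1 ⊗ₜ[R] (G.coeff i • bhat (v.2 - i)) := by
      intro i hi
      have hv : v - i • ((0:ℤ), (1:ℤ)) = (v.1, v.2 - i) := by
        ext <;> simp
      rw [hv, hatil, TensorProduct.tmul_smul]
    rw [Finset.sum_congr rfl h1, ← TensorProduct.tmul_sum, hBrec v.2, TensorProduct.tmul_zero]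
    rfl
  -- membership
  have hmem : ∃ p q, (Polynomial.aeval zm Dc : W)
      = p * Polynomial.aeval xm F + q * Polynomial.aeval ym G := by
    have hF' : (Polynomial.aeval xm F : W) = ∏ j, (xm ^ (Na j) - C' (L (νa j))) := by
      rw [hFdef, map_prod]
      exact Finset.prod_congr rfl fun j _ => by
        rw [map_sub, map_pow, Polynomial.aeval_X, Polynomial.aeval_C]; rfl
    have hG' : (Polynomial.aeval ym G : W) = ∏ i, (ym ^ (Mb i) - C' (L (μb i))) := by
      rw [hGdef, map_prod]
      exact Finset.prod_congr rfl fun i _ => by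
        rw [map_sub, map_pow, Polynomial.aeval_X, Polynomial.aeval_C]; rfl
    have hD' : (Polynomial.aeval zm Dc : W) = ∏ k, (zm ^ (Nc k) - C' (L (νc k))) := by
      rw [hDcdef, map_prod]
      exact Finset.prod_congr rfl fun k _ => by
        rw [map_sub, map_pow, Polynomial.aeval_X, Polynomial.aeval_C]; rfl
    rw [hD', hF', hG']
    have hreidx : ∏ k, (zm ^ (Nc k) - C' (L (νc k)))
        = ∏ p : Fin s × Fin t, (zm ^ (Nat.lcm (Na p.1) (Mb p.2))
            - C' (L (νa p.1 * ((Mb p.2 / Nat.gcd (Na p.1) (Mb p.2) : ℕ) : ℤ)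
                + μb p.2 * ((Na p.1 / Nat.gcd (Na p.1) (Mb p.2) : ℕ) : ℤ)))) := by
      rw [← Equiv.prod_comp finProdFinEquiv
        (fun k => (zm ^ (Nc k) - C' (L (νc k))))]
      exact Finset.prod_congr rfl fun p _ => by
        simp only [hNcdef, hνcdef, Equiv.symm_apply_apply]
    rw [hreidx, Fintype.prod_prod_type]
    -- rows
    have hrow : ∀ j : Fin s, ∃ p q,
        (∏ i : Fin t, (zm ^ (Nat.lcm (Na j) (Mb i))
          - C' (L (νa j * ((Mb i / Nat.gcd (Na j) (Mb i) : ℕ) : ℤ)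
              + μb i * ((Na j / Nat.gcd (Na j) (Mb i) : ℕ) : ℤ)))))
        = p * (∏ i : Fin t, (ym ^ (Mb i) - C' (L (μb i))))
          + q * (xm ^ (Na j) - C' (L (νa j))) := by
      intro j
      obtain ⟨p, q, hpq⟩ := prod_mem_aux Finset.univ
        (fun i => (zm ^ (Nat.lcm (Na j) (Mb i))
          - C' (L (νa j * ((Mb i / Nat.gcd (Na j) (Mb i) : ℕ) : ℤ)
              + μb i * ((Na j / Nat.gcd (Na j) (Mb i) : ℕ) : ℤ)))))
        (fun i => (ym ^ (Mb i) - C' (L (μb i))))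
        (xm ^ (Na j) - C' (L (νa j)))
        (fun i _ => pair_mem (Na j) (Mb i) (hNa j) (νa j) (μb i))
      exact ⟨q, p, by rw [hpq]; ring⟩
    obtain ⟨p, q, hpq⟩ := prod_mem_aux Finset.univ
      (fun j => (∏ i : Fin t, (zm ^ (Nat.lcm (Na j) (Mb i))
          - C' (L (νa j * ((Mb i / Nat.gcd (Na j) (Mb i) : ℕ) : ℤ)
              + μb i * ((Na j / Nat.gcd (Na j) (Mb i) : ℕ) : ℤ))))))
      (fun j => (xm ^ (Na j) - C' (L (νa j))))
      (∏ i : Fin t, (ym ^ (Mb i) - C' (L (μb i))))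
      (fun j _ => hrow j)
    exact ⟨q, p, by rw [hpq]; ring⟩
  -- the key vanishing
  have hK : ∀ n : ℤ, ∑ i ∈ range (Dc.natDegree + 1),
      Dc.coeff i • (ahat (n - i) ⊗ₜ[R] bhat (n - i)) = 0 := by
    intro n
    obtain ⟨p, q, hpq⟩ := hmem
    have hzero : act (Polynomial.aeval zm Dc) atil = 0 := by
      rw [hpq, act_add, act_mul, act_mul, hactF, hactG, act_zero_right, act_zero_right,
        add_zero]
    have := congrFun hzero ((n, n) : ℤ × ℤ)
    rw [zm, act_aeval, Pi.zero_apply] at this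
    rw [← this]
    refine Finset.sum_congr rfl fun i hi => ?_
    have hv : ((n, n) : ℤ × ℤ) - i • ((1:ℤ), (1:ℤ)) = (n - i, n - i) := by
      ext <;> simp
    rw [hv]
  -- values of ahat/bhat at 0
  have hA0 : ahat 0 = -aInf := by
    have h1 := hArec (F.natDegree : ℤ)
    rw [Finset.sum_range_succ, hFm.coeff_natDegree, one_smul, sub_self] at h1
    have h2 : ∀ i ∈ range F.natDegree,
        F.coeff i • ahat ((F.natDegree : ℤ) - i) = F.coeff i • a (F.natDegree - i) := by
      intro i hi
      simp only [mem_range] at hi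
      have : ((F.natDegree : ℤ) - i) = ((F.natDegree - i : ℕ) : ℤ) := by omega
      rw [hahat, this, zext_pos _ _ _ _ (by omega)]
    rw [Finset.sum_congr rfl h2] at h1
    have h3 : aInf = ∑ i ∈ range F.natDegree, F.coeff i • a (F.natDegree - i) := by
      rw [haInf, ← hFdeg, ← congrFun hmula F.natDegree, mulSeq, Finset.sum_range_succ,
        Nat.sub_self, ha0, smul_zero, add_zero]
    rw [← h3] at h1
    exact eq_neg_of_add_eq_zero_right h1
  have hB0 : bhat 0 = -bInf := by
    have h1 := hBrec (G.natDegree : ℤ)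
    rw [Finset.sum_range_succ, hGm.coeff_natDegree, one_smul, sub_self] at h1
    have h2 : ∀ i ∈ range G.natDegree,
        G.coeff i • bhat ((G.natDegree : ℤ) - i) = G.coeff i • b (G.natDegree - i) := by
      intro i hi
      simp only [mem_range] at hi
      have : ((G.natDegree : ℤ) - i) = ((G.natDegree - i : ℕ) : ℤ) := by omega
      rw [hbhat, this, zext_pos _ _ _ _ (by omega)]
    rw [Finset.sum_congr rfl h2] at h1
    have h3 : bInf = ∑ i ∈ range G.natDegree, G.coeff i • b (G.natDegree - i) := by
      rw [hbInf, ← hGdeg, ← congrFun hmulb G.natDegree, mulSeq, Finset.sum_range_succ,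
        Nat.sub_self, hb0, smul_zero, add_zero]
    rw [← h3] at h1
    exact eq_neg_of_add_eq_zero_right h1
  -- assemble the answer
  refine ⟨s * t, Nc, νc, mulSeq Dc (fun k => a k ⊗ₜ[R] b k), hNcpos, ?_, rfl, ?_⟩
  · -- vanishing beyond the degree
    intro n hn
    have hdq : Dc.natDegree < n := by rw [hDcdeg]; exact hn
    simp only [mulSeq]
    have hsub : range (Dc.natDegree + 1) ⊆ range (n + 1) := by
      intro i hi; simp only [mem_range] at *; omega
    rw [← Finset.sum_subset hsub (fun i hi hni => by
      simp only [mem_range] at hi hni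
      rw [Polynomial.coeff_eq_zero_of_natDegree_lt (by omega), zero_smul])]
    have h1 : ∀ i ∈ range (Dc.natDegree + 1),
        Dc.coeff i • (a (n - i) ⊗ₜ[R] b (n - i))
          = Dc.coeff i • (ahat ((n:ℤ) - i) ⊗ₜ[R] bhat ((n:ℤ) - i)) := by
      intro i hi
      simp only [mem_range] at hi
      have hcast : ((n:ℤ) - i) = ((n - i : ℕ) : ℤ) := by omega
      rw [hahat, hbhat, hcast, zext_pos _ _ _ _ (by omega), zext_pos _ _ _ _ (by omega)]
    rw [Finset.sum_congr rfl h1]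
    exact hK n
  · -- the value at infinity
    rw [← hDcdeg]
    simp only [mulSeq]
    rw [Finset.sum_range_succ, Nat.sub_self, ha0, TensorProduct.zero_tmul, smul_zero, add_zero]
    have h1 := hK (Dc.natDegree : ℤ)
    rw [Finset.sum_range_succ, hDcm.coeff_natDegree, one_smul, sub_self, hA0, hB0] at h1
    have h2 : ∀ i ∈ range Dc.natDegree,
        Dc.coeff i • (ahat ((Dc.natDegree : ℤ) - i) ⊗ₜ[R] bhat ((Dc.natDegree : ℤ) - i))
          = Dc.coeff i • (a (Dc.natDegree - i) ⊗ₜ[R] b (Dc.natDegree - i)) := by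
      intro i hi
      simp only [mem_range] at hi
      have hcast : ((Dc.natDegree : ℤ) - i) = ((Dc.natDegree - i : ℕ) : ℤ) := by omega
      rw [hahat, hbhat, hcast, zext_pos _ _ _ _ (by omega), zext_pos _ _ _ _ (by omega)]
    rw [Finset.sum_congr rfl h2] at h1
    rw [TensorProduct.neg_tmul, TensorProduct.tmul_neg, neg_neg] at h1
    exact (eq_neg_of_add_eq_zero_left h1).symm

end Stmt14
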